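/- Let [X,B,m,ν] be a reversible random walk space, p > 1, and Ω ∈ B with 0 < ν(Ω) < ν(Ω_m) < ∞ and Ω satisfying a p-Poincaré inequality. Then λ_{m,p}(Ω) ≤ ν(Ω)^{p−1} / T_{m,p}(Ω). -/

import Mathlib

open MeasureTheory ENNReal Filter Topology

namespace RandomWalkSpace

variable {X : Type*} [MeasurableSpace X]

/-- A random walk: a family of probability measures `m x`, measurably depending on `x`. -/
def IsRandomWalk (m : X → Measure X) : Prop :=
  (∀ x, IsProbabilityMeasure (m x)) ∧
    ∀ A : Set X, MeasurableSet A → Measurable fun x => m x A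

/-- Reversibility (detailed balance) of `ν` with respect to the random walk `m`. -/
def Reversible (m : X → Measure X) (ν : Measure X) : Prop :=
  ∀ A B : Set X, MeasurableSet A → MeasurableSet B →
    ∫⁻ x in A, m x B ∂ν = ∫⁻ x in B, m x A ∂ν

/-- The `m`-boundary of `Ω`. -/
def mBoundary (m : X → Measure X) (Ω : Set X) : Set X :=
  {x | x ∉ Ω ∧ 0 < m x Ω}

/-- The `m`-closure of `Ω`. -/
def mClosure (m : X → Measure X) (Ω : Set X) : Set X :=
  Ω ∪ mBoundary m Ω

/-- `D` is `m`-connected (with respect to `ν`). -/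
def mConnected (m : X → Measure X) (ν : Measure X) (D : Set X) : Prop :=
  ∀ A B : Set X, MeasurableSet A → MeasurableSet B → A ⊆ D → B ⊆ D →
    A ∪ B = D → 0 < ν A → 0 < ν B → 0 < ∫⁻ x in A, m x B ∂ν

/-- The `m`-perimeter of `Ω`. -/
noncomputable def mPerimeter (m : X → Measure X) (ν : Measure X) (Ω : Set X) : ℝ≥0∞ :=
  ∫⁻ x in Ω, m x Ωᶜ ∂ν

/-- `survival m Ω n x` is the mass of paths of `n` jumps starting at `x` that stay in `Ω`. -/
noncomputable def survival (m : X → Measure X) (Ω : Set X) : ℕ → X → ℝ≥0∞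
  | 0, _ => 1
  | n + 1, x => ∫⁻ y in Ω, survival m Ω n y ∂(m x)

/-- `gseq m ν Ω n` is the mass of paths of `n` jumps that start in `Ω` and stay in `Ω`. -/
noncomputable def gseq (m : X → Measure X) (ν : Measure X) (Ω : Set X) (n : ℕ) : ℝ≥0∞ :=
  ∫⁻ x in Ω, survival m Ω n x ∂ν

/-- The spectral `m`-heat content of `Ω` at time `t`. -/
noncomputable def heatContent (m : X → Measure X) (ν : Measure X) (Ω : Set X) (t : ℝ) : ℝ≥0∞ :=
  ∑' k : ℕ, gseq m ν Ω k * ENNReal.ofReal (Real.exp (-t) * t ^ k / (Nat.factorial k))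

/-- The nonlocal `p`-energy `∫_{Ω_m×Ω_m} |f(y) − f(x)|^p dm_x(y)dν(x)`. -/
noncomputable def energy (m : X → Measure X) (ν : Measure X) (Ω : Set X) (p : ℝ)
    (f : X → ℝ) : ℝ≥0∞ :=
  ∫⁻ x in mClosure m Ω, ∫⁻ y in mClosure m Ω, ENNReal.ofReal (|f y - f x| ^ p) ∂(m x) ∂ν

/-- `f ∈ L^p_0(Ω_m,ν)`: `f ∈ L^p(Ω_m,ν)` and `f = 0` ν-a.e. on `∂_m Ω`. -/
def InLp0 (m : X → Measure X) (ν : Measure X) (Ω : Set X) (p : ℝ) (f : X → ℝ) : Prop :=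
  MemLp f (ENNReal.ofReal p) (ν.restrict (mClosure m Ω)) ∧
    ∀ᵐ x ∂ν.restrict (mBoundary m Ω), f x = 0

/-- `Ω` satisfies a `p`-Poincaré inequality. -/
def PoincareInequality (m : X → Measure X) (ν : Measure X) (Ω : Set X) (p : ℝ) : Prop :=
  ∃ lam : ℝ, 0 < lam ∧ ∀ f : X → ℝ, InLp0 m ν Ω p f →
    ENNReal.ofReal lam * ∫⁻ x in Ω, ENNReal.ofReal (|f x| ^ p) ∂ν ≤ energy m ν Ω p f

/-- The `m`-stress function of `Ω`. -/
def IsStressFunction (m : X → Measure X) (ν : Measure X) (Ω : Set X) (f : X → ℝ) : Prop :=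
  InLp0 m ν Ω 2 f ∧ (∀ᵐ x ∂ν.restrict (mClosure m Ω), 0 ≤ f x) ∧
    ∀ᵐ x ∂ν.restrict Ω, -∫ y in mClosure m Ω, (f y - f x) ∂(m x) = 1

/-- The `p`-torsion function of `Ω`. -/
def IsPStressFunction (m : X → Measure X) (ν : Measure X) (Ω : Set X) (p : ℝ)
    (f : X → ℝ) : Prop :=
  InLp0 m ν Ω p f ∧ (∀ᵐ x ∂ν.restrict (mClosure m Ω), 0 ≤ f x) ∧
    ∀ᵐ x ∂ν.restrict Ω,
      -∫ y in mClosure m Ω, |f y - f x| ^ (p - 2) * (f y - f x) ∂(m x) = 1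

/-- The Rayleigh quotient infimum `λ_{m,p}(Ω)`. -/
noncomputable def rayleigh (m : X → Measure X) (ν : Measure X) (Ω : Set X) (p : ℝ) : ℝ≥0∞ :=
  ⨅ (f : X → ℝ) (_ : InLp0 m ν Ω p f)
    (_ : 0 < ∫⁻ x in Ω, ENNReal.ofReal (|f x| ^ p) ∂ν),
    (energy m ν Ω p f / 2) / ∫⁻ x in Ω, ENNReal.ofReal (|f x| ^ p) ∂ν

/-- The `m`-Cheeger constant `h_1^m(Ω)`. -/
noncomputable def cheeger1 (m : X → Measure X) (ν : Measure X) (Ω : Set X) : ℝ≥0∞ :=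
  ⨅ (E : Set X) (_ : MeasurableSet E) (_ : E ⊆ Ω) (_ : 0 < ν E),
    mPerimeter m ν E / ν E

/-- The `m`-`p`-Cheeger constant `h_p^m(Ω)`. -/
noncomputable def cheegerP (m : X → Measure X) (ν : Measure X) (Ω : Set X) (p : ℝ) : ℝ≥0∞ :=
  ⨅ (E : Set X) (_ : MeasurableSet E) (_ : E ⊆ Ω) (_ : 0 < ν E),
    mPerimeter m ν E / ν E ^ p

/-- The functional `F_{m,p}(f) = (1/(2p)) ∫∫ |∇f|^p − ∫_Ω f`, with values in `EReal`. -/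
noncomputable def torsionalFunctional (m : X → Measure X) (ν : Measure X) (Ω : Set X)
    (p : ℝ) (f : X → ℝ) : EReal :=
  ((energy m ν Ω p f / ENNReal.ofReal (2 * p) : ℝ≥0∞) : EReal) -
    ((∫ x in Ω, f x ∂ν : ℝ) : EReal)

end RandomWalkSpace

/-!
Test the Rayleigh quotient with the torsion function `f`. Reversibility makes the measure
`dm_x(y) dν(x)` on `Ω_m × Ω_m` invariant under `(x, y) ↦ (y, x)`, so with `ψ(t) = |t|^(p-2) t`
we get `∫∫ |f y - f x|^p = -2 ∫∫ ψ(f y - f x) f x`; the torsion equation `∫ ψ(f y - f x) dm_x = -1`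
on `Ω` and `f = 0` on `∂_mΩ` turn this into `2 ∫_Ω f`. The Rayleigh quotient of `f` is therefore
`∫_Ω f / ∫_Ω |f|^p`, and Hölder's inequality `(∫_Ω f)^p ≤ ν(Ω)^(p-1) ∫_Ω |f|^p` finishes the proof.
-/

open MeasureTheory ProbabilityTheory

section GeneralFacts

variable {α : Type*} [MeasurableSpace α]

theorem ProbabilityTheory.Kernel.IsReversible.measurePreserving_swap {κ : Kernel α α}
    [IsFiniteKernel κ] {μ : Measure α} [IsFiniteMeasure μ] (h : κ.IsReversible μ) :
    MeasurePreserving Prod.swap (μ ⊗ₘ κ) (μ ⊗ₘ κ) := by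
  refine ⟨measurable_swap, Measure.ext_prod fun {s t} hs ht => ?_⟩
  rw [Measure.map_apply measurable_swap (hs.prod ht), Set.preimage_swap_prod,
    Measure.compProd_apply_prod ht hs, Measure.compProd_apply_prod hs ht, h ht hs]

theorem MeasureTheory.Measure.map_fst_compProd_le {β : Type*} [MeasurableSpace β]
    {μ : Measure α} [SFinite μ] {κ : Kernel α β} [IsSFiniteKernel κ]
    (hκ : ∀ a, κ a Set.univ ≤ 1) : (μ ⊗ₘ κ).map Prod.fst ≤ μ := by
  refine Measure.le_iff.2 fun s hs => ?_
  rw [Measure.map_apply measurable_fst hs, ← Set.prod_univ,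
    Measure.compProd_apply_prod hs .univ]
  exact (lintegral_mono fun a => hκ a).trans_eq (by simp)

theorem MeasureTheory.Measure.lintegral_compProd₀ {β : Type*} [MeasurableSpace β]
    {μ : Measure α} [SFinite μ] {κ : Kernel α β} [IsSFiniteKernel κ]
    {f : α × β → ℝ≥0∞} (hf : AEMeasurable f (μ ⊗ₘ κ)) :
    ∫⁻ z, f z ∂(μ ⊗ₘ κ) = ∫⁻ a, ∫⁻ b, f (a, b) ∂(κ a) ∂μ := by
  rw [lintegral_congr_ae hf.ae_eq_mk, Measure.lintegral_compProd hf.measurable_mk]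
  refine lintegral_congr_ae ?_
  filter_upwards [Measure.ae_ae_of_ae_compProd hf.ae_eq_mk] with a ha
  exact (lintegral_congr_ae ha).symm

theorem ENNReal.div_le_div_rpow_sub_one_of_rpow_le_mul {a b c : ℝ≥0∞} {p : ℝ} (hp : 1 < p)
    (ha₀ : a ≠ 0) (ha : a ≠ ⊤) (h : a ^ p ≤ c * b) : a / b ≤ c / a ^ (p - 1) := by
  have hpow : a * a ^ (p - 1) = a ^ p := by
    nth_rw 1 [← ENNReal.rpow_one a]
    rw [← ENNReal.rpow_add_of_nonneg _ _ zero_le_one (by linarith), add_sub_cancel]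
  rw [ENNReal.le_div_iff_mul_le (.inl (ENNReal.rpow_pos (pos_iff_ne_zero.2 ha₀) ha).ne')
    (.inl (ENNReal.rpow_ne_top_of_nonneg (by linarith) ha)), ← ENNReal.mul_div_right_comm, hpow]
  exact ENNReal.div_le_of_le_mul h

theorem MeasureTheory.ofReal_integral_rpow_le {μ : Measure α} {p : ℝ}
    (hp : 1 < p) {f : α → ℝ} (hf : AEStronglyMeasurable f μ) :
    ENNReal.ofReal (∫ x, f x ∂μ) ^ p ≤
      (∫⁻ x, ENNReal.ofReal (|f x| ^ p) ∂μ) * μ Set.univ ^ (p - 1) := by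
  have hpq := Real.HolderConjugate.conjExponent hp
  have hL1 : ENNReal.ofReal (∫ x, f x ∂μ) ≤ ∫⁻ x, ‖f x‖ₑ ∂μ :=
    (ENNReal.ofReal_le_ofReal (le_abs_self _)).trans_eq (Real.enorm_eq_ofReal_abs _).symm
      |>.trans (enorm_integral_le_lintegral_enorm f)
  have hHolder := ENNReal.lintegral_mul_le_Lp_mul_Lq μ hpq hf.enorm (aemeasurable_const (b := 1))
  simp only [Pi.mul_apply, mul_one, ENNReal.one_rpow, lintegral_const, one_mul] at hHolder
  calc ENNReal.ofReal (∫ x, f x ∂μ) ^ p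
      ≤ ((∫⁻ x, ‖f x‖ₑ ^ p ∂μ) ^ (1 / p) * μ Set.univ ^ (1 / p.conjExponent)) ^ p :=
        ENNReal.rpow_le_rpow (hL1.trans hHolder) (by linarith)
    _ = (∫⁻ x, ENNReal.ofReal (|f x| ^ p) ∂μ) * μ Set.univ ^ (p - 1) := by
        rw [ENNReal.mul_rpow_of_nonneg _ _ (by linarith), ← ENNReal.rpow_mul, ← ENNReal.rpow_mul,
          one_div_mul_cancel (by linarith), ENNReal.rpow_one, one_div_mul_eq_div,
          hpq.div_conj_eq_sub_one]
        simp_rw [Real.enorm_eq_ofReal_abs,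
          ENNReal.ofReal_rpow_of_nonneg (abs_nonneg _) (by linarith : 0 ≤ p)]

end GeneralFacts

section PLaplacian

theorem abs_rpow_sub_two_mul_self_mul_self {p : ℝ} (hp : 0 < p) (t : ℝ) :
    |t| ^ (p - 2) * t * t = |t| ^ p := by
  have h := Real.rpow_add' (abs_nonneg t) (show p - 2 + 2 ≠ 0 by linarith)
  rw [sub_add_cancel, Real.rpow_two, sq_abs] at h
  rw [h, mul_assoc, sq]

theorem abs_abs_rpow_sub_two_mul_self {p : ℝ} (hp : 1 < p) (t : ℝ) :
    |(|t| ^ (p - 2) * t)| = |t| ^ (p - 1) := by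
  have h := Real.rpow_add_one' (abs_nonneg t) (show p - 2 + 1 ≠ 0 by linarith)
  rw [show p - 2 + 1 = p - 1 by ring] at h
  rw [h, abs_mul, abs_of_nonneg (Real.rpow_nonneg (abs_nonneg t) _)]

variable {α : Type*} [MeasurableSpace α]

theorem MeasureTheory.MemLp.abs_rpow_sub_two_mul_self {μ : Measure α} {p : ℝ} (hp : 1 < p)
    {g : α → ℝ} (hg : MemLp g (ENNReal.ofReal p) μ) :
    MemLp (fun x => |g x| ^ (p - 2) * g x) (ENNReal.ofReal p.conjExponent) μ := by
  have hexp : ENNReal.ofReal p / ENNReal.ofReal (p - 1) = ENNReal.ofReal p.conjExponent := by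
    rw [← ENNReal.ofReal_div_of_pos (by linarith), Real.conjExponent]
  refine (hexp ▸ hg.norm_rpow_div (ENNReal.ofReal (p - 1))).congr_norm ?_ (ae_of_all _ fun x => ?_)
  · exact (by fun_prop : Measurable fun t : ℝ => |t| ^ (p - 2) * t).comp_aemeasurable
      hg.aemeasurable |>.aestronglyMeasurable
  · simp only [Real.norm_eq_abs, ENNReal.toReal_ofReal (by linarith : 0 ≤ p - 1)]
    rw [abs_abs_rpow_sub_two_mul_self hp, abs_of_nonneg (Real.rpow_nonneg (abs_nonneg _) _)]

theorem MeasureTheory.MemLp.integrable_abs_rpow_sub_two_mul_self_mul {μ : Measure α} {p : ℝ}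
    (hp : 1 < p) {g h : α → ℝ} (hg : MemLp g (ENNReal.ofReal p) μ)
    (hh : MemLp h (ENNReal.ofReal p) μ) :
    Integrable (fun x => |g x| ^ (p - 2) * g x * h x) μ :=
  have := (Real.HolderConjugate.conjExponent hp).symm.ennrealOfReal
  (hg.abs_rpow_sub_two_mul_self hp).integrable_mul hh

variable {π : Measure (α × α)} {p : ℝ} {f : α → ℝ}

theorem integrable_abs_rpow_sub_two_mul_sub_mul_fst (hπ : MeasurePreserving Prod.swap π π)
    (hp : 1 < p) (hf : MemLp (fun z => f z.1) (ENNReal.ofReal p) π) :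
    Integrable (fun z => |f z.2 - f z.1| ^ (p - 2) * (f z.2 - f z.1) * f z.1) π :=
  ((hf.comp_measurePreserving hπ).sub hf).integrable_abs_rpow_sub_two_mul_self_mul hp hf

/-- Discrete integration by parts for a swap-invariant measure on `α × α`. -/
theorem integral_abs_sub_rpow_eq_neg_two_mul (hπ : MeasurePreserving Prod.swap π π)
    (hp : 1 < p) (hf : MemLp (fun z => f z.1) (ENNReal.ofReal p) π) :
    ∫ z, |f z.2 - f z.1| ^ p ∂π =
      -2 * ∫ z, |f z.2 - f z.1| ^ (p - 2) * (f z.2 - f z.1) * f z.1 ∂π := by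
  set h : α × α → ℝ := fun z => |f z.2 - f z.1| ^ (p - 2) * (f z.2 - f z.1) * f z.1
  have hh : Integrable h π := integrable_abs_rpow_sub_two_mul_sub_mul_fst hπ hp hf
  have hpoint : ∀ z : α × α, |f z.2 - f z.1| ^ p = -h z.swap - h z := fun z => by
    rw [← abs_rpow_sub_two_mul_self_mul_self (by linarith)]
    simp only [h, Prod.fst_swap, Prod.snd_swap, abs_sub_comm (f z.1)]
    ring
  have hswap : ∫ z, h z.swap ∂π = ∫ z, h z ∂π :=
    hπ.integral_comp MeasurableEquiv.prodComm.measurableEmbedding h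
  simp_rw [hpoint]
  have hh' : Integrable (fun z => -h z.swap) π := (hπ.integrable_comp_of_integrable hh).neg
  rw [integral_sub hh' hh, integral_neg, hswap]
  ring

end PLaplacian

namespace RandomWalkSpace

variable {X : Type*} [MeasurableSpace X] {m : X → Measure X} {ν : Measure X}

def IsRandomWalk.kernel (hm : IsRandomWalk m) : Kernel X X :=
  ⟨m, Measure.measurable_of_measurable_coe _ hm.2⟩

instance IsRandomWalk.isMarkovKernel_kernel (hm : IsRandomWalk m) :
    IsMarkovKernel hm.kernel :=
  ⟨hm.1⟩

theorem measurableSet_mBoundary (hm : IsRandomWalk m) {Ω : Set X} (hΩ : MeasurableSet Ω) :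
    MeasurableSet (mBoundary m Ω) :=
  hΩ.compl.inter (measurableSet_lt measurable_const (hm.2 Ω hΩ))

theorem measurableSet_mClosure (hm : IsRandomWalk m) {Ω : Set X} (hΩ : MeasurableSet Ω) :
    MeasurableSet (mClosure m Ω) :=
  hΩ.union (measurableSet_mBoundary hm hΩ)

/-- The measure `dm_x(y) dν(x)` on `C × C`. -/
noncomputable def IsRandomWalk.edgeMeasure (hm : IsRandomWalk m) (ν : Measure X) {C : Set X}
    (hC : MeasurableSet C) : Measure (X × X) :=
  ν.restrict C ⊗ₘ hm.kernel.restrict hC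

section EdgeMeasure

variable (hm : IsRandomWalk m) {C : Set X} (hC : MeasurableSet C)
  [IsFiniteMeasure (ν.restrict C)]

theorem lintegral_edgeMeasure {g : X × X → ℝ≥0∞} (hg : AEMeasurable g (hm.edgeMeasure ν hC)) :
    ∫⁻ z, g z ∂hm.edgeMeasure ν hC = ∫⁻ x in C, ∫⁻ y in C, g (x, y) ∂m x ∂ν :=
  Measure.lintegral_compProd₀ hg

theorem integral_edgeMeasure {g : X × X → ℝ} (hg : Integrable g (hm.edgeMeasure ν hC)) :
    ∫ z, g z ∂hm.edgeMeasure ν hC = ∫ x in C, ∫ y in C, g (x, y) ∂m x ∂ν :=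
  Measure.integral_compProd hg

theorem measurePreserving_swap_edgeMeasure (hrev : Reversible m ν) :
    MeasurePreserving Prod.swap (hm.edgeMeasure ν hC) (hm.edgeMeasure ν hC) := by
  refine Kernel.IsReversible.measurePreserving_swap fun A B hA hB => ?_
  simp only [Kernel.restrict_apply' _ _ _ hA, Kernel.restrict_apply' _ _ _ hB,
    Measure.restrict_restrict hA, Measure.restrict_restrict hB]
  exact hrev _ _ (hA.inter hC) (hB.inter hC)

theorem _root_.MeasureTheory.MemLp.comp_fst_edgeMeasure {p : ℝ≥0∞} {f : X → ℝ}
    (hf : MemLp f p (ν.restrict C)) : MemLp (fun z => f z.1) p (hm.edgeMeasure ν hC) :=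
  (hf.mono_measure (Measure.map_fst_compProd_le fun x => by
    rw [Kernel.restrict_apply' _ _ _ .univ]; exact prob_le_one)).comp_of_map
    measurable_fst.aemeasurable

end EdgeMeasure

variable {Ω : Set X} {p : ℝ} {f : X → ℝ}

theorem subset_mClosure : Ω ⊆ mClosure m Ω :=
  Set.subset_union_left

theorem energy_eq_ofReal_integral_edgeMeasure (hm : IsRandomWalk m) (hrev : Reversible m ν)
    (hC : MeasurableSet (mClosure m Ω)) [IsFiniteMeasure (ν.restrict (mClosure m Ω))]
    (hp : 0 < p) (hf : MemLp f (ENNReal.ofReal p) (ν.restrict (mClosure m Ω))) :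
    energy m ν Ω p f = ENNReal.ofReal (∫ z, |f z.2 - f z.1| ^ p ∂hm.edgeMeasure ν hC) := by
  have hfst := hf.comp_fst_edgeMeasure hm hC
  have hdiff : MemLp (fun z => f z.2 - f z.1) (ENNReal.ofReal p) (hm.edgeMeasure ν hC) :=
    (hfst.comp_measurePreserving (measurePreserving_swap_edgeMeasure hm hC hrev)).sub hfst
  have hint := hdiff.integrable_norm_rpow (by simpa using hp) ENNReal.ofReal_ne_top
  simp only [Real.norm_eq_abs, ENNReal.toReal_ofReal hp.le] at hint
  rw [ofReal_integral_eq_lintegral_ofReal hint (ae_of_all _ fun z => by positivity),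
    lintegral_edgeMeasure hm hC hint.aemeasurable.ennreal_ofReal]
  rfl

theorem IsPStressFunction.integral_abs_sub_rpow_edgeMeasure (hm : IsRandomWalk m)
    (hrev : Reversible m ν) (hΩ : MeasurableSet Ω) (hC : MeasurableSet (mClosure m Ω))
    [IsFiniteMeasure (ν.restrict (mClosure m Ω))] (hp : 1 < p)
    (hf : IsPStressFunction m ν Ω p f) :
    ∫ z, |f z.2 - f z.1| ^ p ∂hm.edgeMeasure ν hC = 2 * ∫ x in Ω, f x ∂ν := by
  have hfst := hf.1.1.comp_fst_edgeMeasure hm hC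
  have hswap := measurePreserving_swap_edgeMeasure hm hC hrev
  rw [integral_abs_sub_rpow_eq_neg_two_mul hswap hp hfst,
    integral_edgeMeasure hm hC (integrable_abs_rpow_sub_two_mul_sub_mul_fst hswap hp hfst)]
  -- the torsion equation on `Ω` and the boundary condition on `∂_mΩ`
  have hpoint : ∀ᵐ x ∂ν.restrict (mClosure m Ω),
      ∫ y in mClosure m Ω, |f y - f x| ^ (p - 2) * (f y - f x) * f x ∂m x = -Ω.indicator f x := by
    simp_rw [integral_mul_const]
    rw [mClosure, ae_restrict_union_iff]
    constructor
    · filter_upwards [hf.2.2, ae_restrict_mem hΩ] with x hx hxΩ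
      rw [Set.indicator_of_mem hxΩ, ← mClosure]
      linear_combination -f x * hx
    · filter_upwards [hf.1.2, ae_restrict_mem (measurableSet_mBoundary hm hΩ)] with x hx hxB
      rw [hx, Set.indicator_of_notMem hxB.1]
      simp
  rw [integral_congr_ae hpoint, integral_neg, integral_indicator hΩ, Measure.restrict_restrict hΩ,
    Set.inter_eq_left.2 subset_mClosure]
  ring

theorem InLp0.rayleigh_le (hf : InLp0 m ν Ω p f)
    (hpos : 0 < ∫⁻ x in Ω, ENNReal.ofReal (|f x| ^ p) ∂ν) :
    rayleigh m ν Ω p ≤ (energy m ν Ω p f / 2) / ∫⁻ x in Ω, ENNReal.ofReal (|f x| ^ p) ∂ν :=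
  iInf₂_le_of_le f hf (iInf_le _ hpos)

theorem IsPStressFunction.energy_eq_two_mul (hm : IsRandomWalk m) (hrev : Reversible m ν)
    (hΩ : MeasurableSet Ω) (hfin : ν (mClosure m Ω) ≠ ⊤) (hp : 1 < p)
    (hf : IsPStressFunction m ν Ω p f) :
    energy m ν Ω p f = 2 * ENNReal.ofReal (∫ x in Ω, f x ∂ν) := by
  have := isFiniteMeasure_restrict.2 hfin
  have hC := measurableSet_mClosure hm hΩ
  rw [energy_eq_ofReal_integral_edgeMeasure hm hrev hC (by linarith) hf.1.1,
    hf.integral_abs_sub_rpow_edgeMeasure hm hrev hΩ hC hp, ENNReal.ofReal_mul zero_le_two,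
    ENNReal.ofReal_ofNat]

theorem IsPStressFunction.setIntegral_nonneg (hf : IsPStressFunction m ν Ω p f) :
    0 ≤ ∫ x in Ω, f x ∂ν :=
  setIntegral_nonneg_of_ae_restrict (ae_restrict_of_ae_restrict_of_subset subset_mClosure hf.2.1)

end RandomWalkSpace

theorem rayleigh_le_torsion_general {X : Type*} [MeasurableSpace X]
    (m : X → Measure X) (ν : Measure X)
    (hm : RandomWalkSpace.IsRandomWalk m) (hrev : RandomWalkSpace.Reversible m ν)
    (p : ℝ) (hp : 1 < p)
    (Ω : Set X) (hΩ : MeasurableSet Ω)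
    (h0 : 0 < ν Ω)
    (h2 : ν (RandomWalkSpace.mClosure m Ω) < ⊤)
    (f : X → ℝ) (hf : RandomWalkSpace.IsPStressFunction m ν Ω p f) :
    RandomWalkSpace.rayleigh m ν Ω p ≤
      ν Ω ^ (p - 1) / ENNReal.ofReal ((∫ x in Ω, f x ∂ν) ^ (p - 1)) := by
  set I := ∫ x in Ω, f x ∂ν
  set D := ∫⁻ x in Ω, ENNReal.ofReal (|f x| ^ p) ∂ν
  have henergy : RandomWalkSpace.energy m ν Ω p f = 2 * ENNReal.ofReal I :=
    hf.energy_eq_two_mul hm hrev hΩ h2.ne hp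
  have hHolder : ENNReal.ofReal I ^ p ≤ ν Ω ^ (p - 1) * D := by
    rw [mul_comm, ← Measure.restrict_apply_univ]
    exact ofReal_integral_rpow_le hp
      (hf.1.1.1.mono_measure (Measure.restrict_mono RandomWalkSpace.subset_mClosure le_rfl))
  have hI₀ : 0 ≤ I := hf.setIntegral_nonneg
  rcases hI₀.eq_or_lt with hI | hI
  · rw [← hI, Real.zero_rpow (by linarith), ENNReal.ofReal_zero,
      ENNReal.div_zero (ENNReal.rpow_pos_of_nonneg h0 (by linarith)).ne']
    exact le_top
  have hIpow : 0 < ENNReal.ofReal I ^ p :=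
    ENNReal.rpow_pos (ENNReal.ofReal_pos.2 hI) ENNReal.ofReal_ne_top
  have hD : 0 < D := pos_iff_ne_zero.2 fun hD => by
    rw [hD, mul_zero] at hHolder
    exact hIpow.not_ge hHolder
  calc RandomWalkSpace.rayleigh m ν Ω p ≤ (RandomWalkSpace.energy m ν Ω p f / 2) / D :=
        hf.1.rayleigh_le hD
    _ = ENNReal.ofReal I / D := by
        rw [henergy, mul_comm, ENNReal.mul_div_cancel_right two_ne_zero ENNReal.ofNat_ne_top]
    _ ≤ ν Ω ^ (p - 1) / ENNReal.ofReal I ^ (p - 1) :=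
        ENNReal.div_le_div_rpow_sub_one_of_rpow_le_mul hp (ENNReal.ofReal_pos.2 hI).ne'
          ENNReal.ofReal_ne_top hHolder
    _ = ν Ω ^ (p - 1) / ENNReal.ofReal (I ^ (p - 1)) := by
        rw [ENNReal.ofReal_rpow_of_nonneg hI.le (by linarith)]

/-- `λ_{m,p}(Ω) ≤ ν(Ω)^{p−1} / T_{m,p}(Ω)`. -/
theorem rayleigh_le_torsion {X : Type*} [MeasurableSpace X]
    (m : X → Measure X) (ν : Measure X) [SigmaFinite ν]
    (hm : RandomWalkSpace.IsRandomWalk m) (hrev : RandomWalkSpace.Reversible m ν)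
    (p : ℝ) (hp : 1 < p)
    (Ω : Set X) (hΩ : MeasurableSet Ω)
    (h0 : 0 < ν Ω) (h1 : ν Ω < ν (RandomWalkSpace.mClosure m Ω))
    (h2 : ν (RandomWalkSpace.mClosure m Ω) < ⊤)
    (hpoinc : RandomWalkSpace.PoincareInequality m ν Ω p)
    (f : X → ℝ) (hf : RandomWalkSpace.IsPStressFunction m ν Ω p f) :
    RandomWalkSpace.rayleigh m ν Ω p ≤
      ν Ω ^ (p - 1) / ENNReal.ofReal ((∫ x in Ω, f x ∂ν) ^ (p - 1)) :=
  rayleigh_le_torsion_general m ν hm hrev p hp Ω hΩ h0 h2 f hf
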